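/- Theorem 2 (FDR control of multi-step QuTE, positively dependent p-values): for every graph G, every integer c ≥ 0 and every level α ∈ (0,1), if the vector of N p-values is PRDS on each null and every null p-value is superuniform, then the c-step QuTE procedure at level α satisfies FDR ≤ α·|H^0|/N. -/

import Mathlib

open MeasureTheory ProbabilityTheory Finset

open Classical in
/-- The Benjamini–Hochberg count `k̂_α(P)`: the largest `k ∈ {0,…,N}` such that
at least `k` of the p-values are `≤ α k / N`, where `N` is the number of hypotheses. -/
noncomputable def bhCount {I : Type*} [Fintype I] (α : ℝ) (P : I → ℝ) : ℕ :=
  Nat.findGreatest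
    (fun k => k ≤ (Finset.univ.filter fun i => P i ≤ α * k / (Fintype.card I)).card)
    (Fintype.card I)

open Classical in
/-- The Benjamini–Hochberg rejection set `Rej_α(P) = {i : P i ≤ α k̂_α(P) / N}`. -/
noncomputable def bhRej {I : Type*} [Fintype I] (α : ℝ) (P : I → ℝ) : Finset I :=
  Finset.univ.filter fun i => P i ≤ α * (bhCount α P) / (Fintype.card I)

open Classical in
/-- The p-value vector `P^{b,c}` known to node `b` after `c` rounds of communication:
every p-value hosted at a node of graph distance more than `c` from `b` is replaced by `1`. -/
noncomputable def quteMasked {V : Type*} (G : SimpleGraph V) (n : V → ℕ)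
    (c : ℕ) (P : (Σ a : V, Fin (n a)) → ℝ) (b : V) : (Σ a : V, Fin (n a)) → ℝ :=
  fun i => if G.edist b i.1 ≤ c then P i else 1

open Classical in
/-- The rejection set of the `c`-step QuTE procedure at level `α`: hypothesis `j` at node `a`
is rejected iff some node `b` within graph distance `c` of `a` rejects it in its local BH test
at level `α` on the p-values it knows (unknown p-values set to `1`). -/
noncomputable def quteRej {V : Type*} [Fintype V] (G : SimpleGraph V) (n : V → ℕ)
    (c : ℕ) (α : ℝ) (P : (Σ a : V, Fin (n a)) → ℝ) : Finset (Σ a : V, Fin (n a)) :=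
  Finset.univ.filter fun i => ∃ b : V, G.edist i.1 b ≤ c ∧
    P i ≤ α * (bhCount α (quteMasked G n c P b)) / (Fintype.card (Σ a : V, Fin (n a)))

open scoped ENNReal

/-!
QuTE's rejection set `R(P)` is antitone in the p-values and self-consistent: every rejected
p-value is at most `α |R(P)| / N`, because each local BH count `k̂^{b,c}` is at most `|R(P)|`
(the p-values it counts sit within distance `c` of `b` and pass its threshold, so QuTE rejects
them). Self-consistency bounds the false discovery proportion by
`∑_{i ∈ H⁰} ∑_k k⁻¹ 1{P_i ≤ αk/N, |R| = k}`. Superuniformity turns the `k`-th expected term into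
`(α/N) Pr(|R| = k | P_i ≤ αk/N)`, and PRDS, applied to the nondecreasing sets `{|R| ≤ k}`,
makes these conditional probabilities telescope to at most `1`.
-/

lemma measurable_card_filter {γ I : Type*} [MeasurableSpace γ] [Fintype I] {S : γ → I → Prop}
    [∀ x, DecidablePred (S x)] (hS : ∀ i, MeasurableSet {x | S x i}) :
    Measurable fun x => #{i | S x i} := by
  simp_rw [card_filter]
  exact Finset.measurable_sum _ fun i _ => Measurable.ite (hS i) measurable_const measurable_const

section BenjaminiHochberg

variable {I : Type*} [Fintype I]

lemma bhCount_le_card (α : ℝ) (P : I → ℝ) : bhCount α P ≤ Fintype.card I :=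
  Nat.findGreatest_le _

lemma bhCount_le_card_filter (α : ℝ) (P : I → ℝ) :
    bhCount α P ≤ #{i | P i ≤ α * bhCount α P / Fintype.card I} :=
  Nat.findGreatest_spec (P := fun k => k ≤ #{i | P i ≤ α * k / Fintype.card I})
    (Nat.zero_le _) (Nat.zero_le _)

lemma mul_bhCount_div_card_le {α : ℝ} (hα : 0 ≤ α) (P : I → ℝ) :
    α * bhCount α P / Fintype.card I ≤ α :=
  div_le_of_le_mul₀ (Nat.cast_nonneg _) hα <|
    mul_le_mul_of_nonneg_left (by exact_mod_cast bhCount_le_card α P) hα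

lemma bhCount_antitone (α : ℝ) : Antitone (bhCount (I := I) α) := fun P Q hPQ =>
  Nat.le_findGreatest (bhCount_le_card α Q) <| (bhCount_le_card_filter α Q).trans <|
    card_le_card fun i hi => by
      simp only [mem_filter, mem_univ, true_and] at hi ⊢
      exact (hPQ i).trans hi

lemma measurable_bhCount (α : ℝ) : Measurable (bhCount (I := I) α) :=
  measurable_findGreatest fun _ _ =>
    measurable_card_filter (fun i => measurableSet_le (measurable_pi_apply i) measurable_const)
      measurableSet_Ici

end BenjaminiHochberg

section QuTE

variable {V : Type*} (G : SimpleGraph V) (n : V → ℕ) (c : ℕ)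

lemma quteMasked_monotone (b : V) : Monotone fun P => quteMasked G n c P b := by
  intro P Q hPQ i
  dsimp only [quteMasked]
  split_ifs
  exacts [hPQ i, le_rfl]

lemma measurable_quteMasked (b : V) : Measurable fun P => quteMasked G n c P b := by
  refine measurable_pi_iff.2 fun i => ?_
  dsimp only [quteMasked]
  split_ifs
  exacts [measurable_pi_apply i, measurable_const]

variable [Fintype V]

lemma measurable_card_quteRej (α : ℝ) : Measurable fun P => #(quteRej G n c α P) := by
  refine measurable_card_filter fun i => ?_
  simp only [Set.ofPred_exists]
  refine MeasurableSet.iUnion fun b => (MeasurableSet.const _).inter ?_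
  have hk : Measurable fun P => (bhCount α (quteMasked G n c P b) : ℝ) :=
    measurable_from_nat.comp ((measurable_bhCount α).comp (measurable_quteMasked G n c b))
  exact measurableSet_le (measurable_pi_apply i) ((hk.const_mul α).div_const _)

variable {α : ℝ}

lemma mem_quteRej {P : (Σ a : V, Fin (n a)) → ℝ} {i : Σ a : V, Fin (n a)} :
    i ∈ quteRej G n c α P ↔ ∃ b : V, G.edist i.1 b ≤ c ∧
      P i ≤ α * bhCount α (quteMasked G n c P b) / Fintype.card (Σ a : V, Fin (n a)) := by
  simp [quteRej]

lemma quteRej_antitone (hα : 0 ≤ α) : Antitone (quteRej G n c α) := by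
  intro P Q hPQ i hi
  obtain ⟨b, hb, hle⟩ := (mem_quteRej G n c).1 hi
  have hk := bhCount_antitone α (quteMasked_monotone G n c b hPQ)
  exact (mem_quteRej G n c).2 ⟨b, hb, (hPQ i).trans (hle.trans (by gcongr))⟩

lemma bhCount_quteMasked_le_card_quteRej (hα0 : 0 ≤ α) (hα1 : α < 1)
    (P : (Σ a : V, Fin (n a)) → ℝ) (b : V) :
    bhCount α (quteMasked G n c P b) ≤ #(quteRej G n c α P) := by
  refine (bhCount_le_card_filter α _).trans (card_le_card fun j hj => ?_)
  simp only [mem_filter, mem_univ, true_and] at hj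
  -- a masked p-value equals `1`, above every BH threshold since `α < 1`
  have hdist : G.edist b j.1 ≤ c := by
    by_contra hfar
    simp only [quteMasked, hfar, if_false] at hj
    linarith [mul_bhCount_div_card_le hα0 (quteMasked G n c P b)]
  simp only [quteMasked, hdist, if_true] at hj
  exact (mem_quteRej G n c).2 ⟨b, by rwa [SimpleGraph.edist_comm], hj⟩

lemma le_of_mem_quteRej (hα0 : 0 ≤ α) (hα1 : α < 1) (P : (Σ a : V, Fin (n a)) → ℝ)
    {i : Σ a : V, Fin (n a)} (hi : i ∈ quteRej G n c α P) :
    P i ≤ α * #(quteRej G n c α P) / Fintype.card (Σ a : V, Fin (n a)) := by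
  obtain ⟨b, -, hle⟩ := (mem_quteRej G n c).1 hi
  have hk := bhCount_quteMasked_le_card_quteRej G n c hα0 hα1 P b
  exact hle.trans (by gcongr)

end QuTE

section Telescoping

variable {Ω : Type*} [MeasurableSpace Ω]

lemma sum_Icc_measure_eq_le_measure_le (ν : ℕ → Measure Ω) {K : Ω → ℕ} (hK : Measurable K)
    (m : ℕ) (hν : ∀ k, 1 ≤ k → k < m → ν k {ω | K ω ≤ k} ≤ ν (k + 1) {ω | K ω ≤ k}) :
    ∑ k ∈ Icc 1 m, ν k {ω | K ω = k} ≤ ν m {ω | K ω ≤ m} := by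
  induction m with
  | zero => simp
  | succ m ih =>
    have hprev : ∑ k ∈ Icc 1 m, ν k {ω | K ω = k} ≤ ν (m + 1) {ω | K ω ≤ m} := by
      rcases Nat.eq_zero_or_pos m with rfl | hm
      · simp
      · exact (ih fun k hk hkm => hν k hk (by omega)).trans (hν m hm (by omega))
    have hsplit : {ω | K ω ≤ m + 1} = {ω | K ω ≤ m} ∪ {ω | K ω = m + 1} := by
      ext ω
      simp only [Set.mem_ofPred_eq, Set.mem_union]
      omega
    have hdisj : Disjoint {ω | K ω ≤ m} {ω | K ω = m + 1} :=
      Set.disjoint_left.2 fun ω h h' => by simp_all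
    rw [sum_Icc_succ_top (by omega), hsplit, measure_union hdisj (hK (measurableSet_singleton _))]
    gcongr

variable {μ : Measure Ω} [IsFiniteMeasure μ]

lemma inv_mul_measure_inter_le_mul_cond {S : Set Ω} (hS : MeasurableSet S) (A : Set Ω)
    {r x : ℝ≥0∞} (hx0 : x ≠ 0) (hx : x ≠ ∞) (hμS : μ S ≤ r * x) :
    x⁻¹ * μ (S ∩ A) ≤ r * μ[A | S] :=
  calc x⁻¹ * μ (S ∩ A) = x⁻¹ * (μ[A | S] * μ S) := by rw [cond_mul_eq_inter hS]
    _ ≤ x⁻¹ * (μ[A | S] * (r * x)) := by gcongr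
    _ = r * μ[A | S] * (x⁻¹ * x) := by ring
    _ = r * μ[A | S] := by rw [ENNReal.inv_mul_cancel hx0 hx, mul_one]

lemma sum_inv_mul_measure_le {X : Ω → ℝ} (hX : Measurable X) {K : Ω → ℕ} (hK : Measurable K)
    {β : ℝ} (hβ : 0 ≤ β) {m : ℕ} (hm : β * m ≤ 1)
    (hX_le : ∀ u ∈ Set.Icc (0 : ℝ) 1, μ {ω | X ω ≤ u} ≤ ENNReal.ofReal u)
    (hXK : ∀ k, 1 ≤ k → k < m → μ[{ω | K ω ≤ k} | {ω | X ω ≤ β * k}] ≤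
      μ[{ω | K ω ≤ k} | {ω | X ω ≤ β * ↑(k + 1)}]) :
    ∑ k ∈ Icc 1 m, (k : ℝ≥0∞)⁻¹ * μ ({ω | X ω ≤ β * k} ∩ {ω | K ω = k}) ≤
      ENNReal.ofReal β := by
  have hterm : ∀ k ∈ Icc 1 m, (k : ℝ≥0∞)⁻¹ * μ ({ω | X ω ≤ β * k} ∩ {ω | K ω = k}) ≤
      ENNReal.ofReal β * μ[{ω | K ω = k} | {ω | X ω ≤ β * k}] := by
    intro k hk
    obtain ⟨hk1, hkm⟩ := mem_Icc.1 hk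
    have hβk : β * k ≤ 1 := le_trans (by gcongr) hm
    refine inv_mul_measure_inter_le_mul_cond (measurableSet_le hX measurable_const) _
      (Nat.cast_ne_zero.2 (Nat.one_le_iff_ne_zero.1 hk1)) (ENNReal.natCast_ne_top k) ?_
    rw [← ENNReal.ofReal_natCast, ← ENNReal.ofReal_mul hβ]
    exact hX_le _ ⟨by positivity, hβk⟩
  calc _ ≤ ∑ k ∈ Icc 1 m, ENNReal.ofReal β * μ[{ω | K ω = k} | {ω | X ω ≤ β * k}] :=
        sum_le_sum hterm
    _ = ENNReal.ofReal β * ∑ k ∈ Icc 1 m, μ[{ω | K ω = k} | {ω | X ω ≤ β * k}] :=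
        (mul_sum _ _ _).symm
    _ ≤ ENNReal.ofReal β * μ[{ω | K ω ≤ m} | {ω | X ω ≤ β * m}] := by
        gcongr
        exact sum_Icc_measure_eq_le_measure_le (fun k => μ[|{ω | X ω ≤ β * k}]) hK m hXK
    _ ≤ ENNReal.ofReal β := mul_le_of_le_one_right' prob_le_one

end Telescoping

section SelfConsistent

variable {I : Type*} [Fintype I]

def stepUpEvent (Rej : (I → ℝ) → Finset I) (β : ℝ) (i : I) (k : ℕ) : Set (I → ℝ) :=
  {q | q i ≤ β * k ∧ #(Rej q) = k}

lemma fdp_le_sum_indicator_stepUpEvent [DecidableEq I] (Rej : (I → ℝ) → Finset I) {α : ℝ}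
    (H0 : Finset I) (p : I → ℝ) (hp : ∀ i ∈ Rej p, p i ≤ α * #(Rej p) / Fintype.card I) :
    (#(Rej p ∩ H0) : ℝ) / (max #(Rej p) 1 : ℕ) ≤ ∑ i ∈ H0, ∑ k ∈ Icc 1 (Fintype.card I),
      (stepUpEvent Rej (α / Fintype.card I) i k).indicator (fun _ => (k : ℝ)⁻¹) p := by
  set r := #(Rej p)
  have hnonneg : ∀ (i : I) (k : ℕ),
      0 ≤ (stepUpEvent Rej (α / Fintype.card I) i k).indicator (fun _ => (k : ℝ)⁻¹) p :=
    fun _ _ => Set.indicator_nonneg (fun _ _ => by positivity) _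
  have hterm : ∀ i ∈ H0, (if i ∈ Rej p then (r : ℝ)⁻¹ else 0) ≤ ∑ k ∈ Icc 1 (Fintype.card I),
      (stepUpEvent Rej (α / Fintype.card I) i k).indicator (fun _ => (k : ℝ)⁻¹) p := by
    intro i _
    split_ifs with hi
    · have hr : r ∈ Icc 1 (Fintype.card I) := mem_Icc.2 ⟨card_pos.2 ⟨i, hi⟩, card_le_univ _⟩
      have hpi : p ∈ stepUpEvent Rej (α / Fintype.card I) i r :=
        ⟨by rw [div_mul_eq_mul_div]; exact hp i hi, rfl⟩
      rw [← Set.indicator_of_mem hpi fun _ => (r : ℝ)⁻¹]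
      exact single_le_sum (fun k _ => hnonneg i k) hr
    · exact sum_nonneg fun k _ => hnonneg i k
  have hmax : (#(Rej p ∩ H0) : ℝ) / (max r 1 : ℕ) = #(H0 ∩ Rej p) * (r : ℝ)⁻¹ := by
    rw [inter_comm, ← div_eq_mul_inv]
    rcases Nat.eq_zero_or_pos r with hr | hr
    · have : #(H0 ∩ Rej p) = 0 := Nat.eq_zero_of_le_zero (hr ▸ card_le_card inter_subset_right)
      simp [this]
    · rw [max_eq_left hr]
  calc _ = ∑ i ∈ H0, if i ∈ Rej p then (r : ℝ)⁻¹ else 0 := by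
        rw [hmax, sum_ite_mem, sum_const, nsmul_eq_mul]
    _ ≤ _ := sum_le_sum hterm

end SelfConsistent

section PRDS

variable {I Ω : Type*} [MeasurableSpace Ω]

def IsPRDSOn (μ : Measure Ω) (P : Ω → I → ℝ) (i : I) : Prop :=
  ∀ D : Set (I → ℝ), MeasurableSet D →
    (∀ x ∈ D, ∀ y ∈ Set.Icc (0 : I → ℝ) 1, x ≤ y → y ∈ D) →
    ∀ s t : ℝ, 0 < s → s ≤ t → t ≤ 1 → 0 < μ {ω | P ω i ≤ s} →
      (μ[|{ω | P ω i ≤ s}]) {ω | P ω ∈ D} ≤ (μ[|{ω | P ω i ≤ t}]) {ω | P ω ∈ D}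

lemma IsPRDSOn.cond_le_cond {μ : Measure Ω} {P : Ω → I → ℝ} {i : I} (h : IsPRDSOn μ P i)
    {D : Set (I → ℝ)} (hD : MeasurableSet D) (hDup : IsUpperSet D) {s t : ℝ} (hs : 0 < s)
    (hst : s ≤ t) (ht : t ≤ 1) :
    μ[P ⁻¹' D | {ω | P ω i ≤ s}] ≤ μ[P ⁻¹' D | {ω | P ω i ≤ t}] := by
  rcases eq_or_ne (μ {ω | P ω i ≤ s}) 0 with h0 | h0
  · simp [cond_eq_zero_of_meas_eq_zero h0]
  · exact h D hD (fun x hx y _ hxy => hDup hxy hx) s t hs hst ht (pos_iff_ne_zero.2 h0)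

end PRDS

section SelfConsistentFDR

variable {I : Type*} [Fintype I] {Ω : Type*} [MeasurableSpace Ω] (μ : Measure Ω)
  [IsFiniteMeasure μ] (Rej : (I → ℝ) → Finset I) {α : ℝ} (P : Ω → I → ℝ)

lemma sum_measureReal_stepUpEvent_le (hRej_meas : Measurable fun p => #(Rej p))
    (hRej_anti : Antitone fun p => #(Rej p)) (hα0 : 0 < α) (hα1 : α ≤ 1)
    (hP : ∀ i, Measurable fun ω => P ω i) {i : I}
    (hnull : ∀ u ∈ Set.Icc (0 : ℝ) 1, μ {ω | P ω i ≤ u} ≤ ENNReal.ofReal u)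
    (hPRDS : IsPRDSOn μ P i) :
    ∑ k ∈ Icc 1 (Fintype.card I),
      μ.real (P ⁻¹' stepUpEvent Rej (α / Fintype.card I) i k) * (k : ℝ)⁻¹ ≤
        α / Fintype.card I := by
  set N := Fintype.card I
  have hPm : Measurable P := measurable_pi_iff.2 hP
  have hN : (0 : ℝ) < N := by exact_mod_cast Fintype.card_pos_iff.2 ⟨i⟩
  have hthr : ∀ k ≤ N, α / N * k ≤ 1 := fun k hk =>
    calc α / N * k ≤ α / N * N := by gcongr
      _ ≤ 1 := by rwa [div_mul_cancel₀ _ hN.ne']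
  have hmono : ∀ k, 1 ≤ k → k < N → μ[{ω | #(Rej (P ω)) ≤ k} | {ω | P ω i ≤ α / N * k}] ≤
      μ[{ω | #(Rej (P ω)) ≤ k} | {ω | P ω i ≤ α / N * ↑(k + 1)}] := fun k hk hkN =>
    hPRDS.cond_le_cond (hRej_meas measurableSet_Iic)
      (fun _ _ hpq hp => (hRej_anti hpq).trans hp) (by positivity) (by gcongr; simp)
      (hthr _ hkN)
  have hbound := sum_inv_mul_measure_le (hP i) (hRej_meas.comp hPm) (by positivity)
    (hthr N le_rfl) hnull hmono
  refine le_of_eq_of_le ?_ (ENNReal.toReal_le_of_le_ofReal (by positivity) hbound)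
  rw [ENNReal.toReal_sum fun k hk => ENNReal.mul_ne_top
    (ENNReal.inv_ne_top.2 <| Nat.cast_ne_zero.2 (Nat.one_le_iff_ne_zero.1 (mem_Icc.1 hk).1))
    (measure_ne_top _ _)]
  refine sum_congr rfl fun k _ => ?_
  rw [mul_comm, ENNReal.toReal_mul, ENNReal.toReal_inv, ENNReal.toReal_natCast]
  rfl

theorem integral_fdp_le_of_selfConsistent [DecidableEq I]
    (hRej_meas : Measurable fun p => #(Rej p)) (hRej_anti : Antitone fun p => #(Rej p))
    (hα0 : 0 < α) (hα1 : α ≤ 1) (hP : ∀ i, Measurable fun ω => P ω i)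
    (hRej_le : ∀ p, ∀ i ∈ Rej p, p i ≤ α * #(Rej p) / Fintype.card I) (H0 : Finset I)
    (hnull : ∀ i ∈ H0, ∀ u ∈ Set.Icc (0 : ℝ) 1, μ {ω | P ω i ≤ u} ≤ ENNReal.ofReal u)
    (hPRDS : ∀ i ∈ H0, IsPRDSOn μ P i) :
    ∫ ω, (#(Rej (P ω) ∩ H0) : ℝ) / (max #(Rej (P ω)) 1 : ℕ) ∂μ ≤
      α * #H0 / Fintype.card I := by
  set N := Fintype.card I
  set E : I → ℕ → Set Ω := fun i k => P ⁻¹' stepUpEvent Rej (α / N) i k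
  have hE : ∀ i k, MeasurableSet (E i k) := fun i k =>
    (measurableSet_le (hP i) measurable_const).inter
      (hRej_meas.comp (measurable_pi_iff.2 hP) (measurableSet_singleton k))
  have hint : ∀ i k, Integrable ((E i k).indicator fun _ => (k : ℝ)⁻¹) μ := fun i k =>
    (integrable_const _).indicator (hE i k)
  calc _ ≤ ∫ ω, ∑ i ∈ H0, ∑ k ∈ Icc 1 N, (E i k).indicator (fun _ => (k : ℝ)⁻¹) ω ∂μ :=
        integral_mono_of_nonneg (ae_of_all _ fun ω => by positivity)
          (integrable_finsetSum _ fun i _ => integrable_finsetSum _ fun k _ => hint i k)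
          (ae_of_all _ fun ω => fdp_le_sum_indicator_stepUpEvent Rej H0 (P ω) (hRej_le (P ω)))
    _ = ∑ i ∈ H0, ∑ k ∈ Icc 1 N, μ.real (E i k) * (k : ℝ)⁻¹ := by
        rw [integral_finsetSum _ fun i _ => integrable_finsetSum _ fun k _ => hint i k]
        refine sum_congr rfl fun i _ => ?_
        rw [integral_finsetSum _ fun k _ => hint i k]
        exact sum_congr rfl fun k _ => integral_indicator_const _ (hE i k)
    _ ≤ ∑ _ ∈ H0, α / N := sum_le_sum fun i hi =>
        sum_measureReal_stepUpEvent_le μ Rej P hRej_meas hRej_anti hα0 hα1 hP (hnull i hi)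
          (hPRDS i hi)
    _ = α * #H0 / N := by rw [sum_const, nsmul_eq_mul]; ring

end SelfConsistentFDR

theorem qute_multi_step_fdr_control_prds_general
    {V : Type*} [Fintype V] [DecidableEq V] (G : SimpleGraph V)
    (n : V → ℕ)
    {Ω : Type*} [MeasurableSpace Ω] (μ : Measure Ω) [IsProbabilityMeasure μ]
    (P : Ω → (Σ a : V, Fin (n a)) → ℝ)
    (hPmeas : ∀ i, Measurable fun ω => P ω i)
    (H0 : Finset (Σ a : V, Fin (n a)))
    (hnull : ∀ i ∈ H0, ∀ u ∈ Set.Icc (0 : ℝ) 1,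
      μ {ω | P ω i ≤ u} ≤ ENNReal.ofReal u)
    -- PRDS on each null: for every measurable nondecreasing set `D ⊆ [0,1]^N` and
    -- all `0 < s ≤ t ≤ 1` with `Pr(P i ≤ s) > 0`,
    -- `Pr(P ∈ D | P i ≤ s) ≤ Pr(P ∈ D | P i ≤ t)`.
    (hPRDS : ∀ i ∈ H0, ∀ D : Set ((Σ a : V, Fin (n a)) → ℝ), MeasurableSet D →
      (∀ x ∈ D, ∀ y ∈ Set.Icc (0 : (Σ a : V, Fin (n a)) → ℝ) 1, x ≤ y → y ∈ D) →
      ∀ s t : ℝ, 0 < s → s ≤ t → t ≤ 1 → 0 < μ {ω | P ω i ≤ s} →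
        (μ[|{ω | P ω i ≤ s}]) {ω | P ω ∈ D} ≤ (μ[|{ω | P ω i ≤ t}]) {ω | P ω ∈ D})
    (α : ℝ) (hα : α ∈ Set.Ioo (0 : ℝ) 1) (c : ℕ) :
    ∫ ω, (((quteRej G n c α (P ω) ∩ H0).card : ℝ) /
        (max ((quteRej G n c α (P ω)).card) 1 : ℕ)) ∂μ
      ≤ α * H0.card / Fintype.card (Σ a : V, Fin (n a)) := by
  obtain ⟨hα0, hα1⟩ := hα
  exact integral_fdp_le_of_selfConsistent μ (quteRej G n c α) P
    (measurable_card_quteRej G n c α) (card_mono.comp_antitone (quteRej_antitone G n c hα0.le))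
    hα0 hα1.le hPmeas (fun p _ hi => le_of_mem_quteRej G n c hα0.le hα1 p hi) H0 hnull hPRDS

/-- **Theorem 2 (FDR control of multi-step QuTE, positively dependent p-values).**
For every graph `G` and level `α ∈ (0,1)`, if the vector of `N` p-values is PRDS on each null
and every null p-value is superuniform, then the `c`-step QuTE procedure at level `α`
satisfies `FDR ≤ α |H⁰| / N`. -/
theorem qute_multi_step_fdr_control_prds
    {V : Type*} [Fintype V] [DecidableEq V] [Nonempty V] (G : SimpleGraph V)
    (n : V → ℕ) (hn : ∀ a, 1 ≤ n a)
    {Ω : Type*} [MeasurableSpace Ω] (μ : Measure Ω) [IsProbabilityMeasure μ]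
    (P : Ω → (Σ a : V, Fin (n a)) → ℝ)
    (hPmeas : ∀ i, Measurable fun ω => P ω i)
    (hPrange : ∀ ω i, P ω i ∈ Set.Icc (0 : ℝ) 1)
    (H0 : Finset (Σ a : V, Fin (n a)))
    (hnull : ∀ i ∈ H0, ∀ u ∈ Set.Icc (0 : ℝ) 1,
      μ {ω | P ω i ≤ u} ≤ ENNReal.ofReal u)
    -- PRDS on each null: for every measurable nondecreasing set `D ⊆ [0,1]^N` and
    -- all `0 < s ≤ t ≤ 1` with `Pr(P i ≤ s) > 0`,
    -- `Pr(P ∈ D | P i ≤ s) ≤ Pr(P ∈ D | P i ≤ t)`.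
    (hPRDS : ∀ i ∈ H0, ∀ D : Set ((Σ a : V, Fin (n a)) → ℝ), MeasurableSet D →
      (∀ x ∈ D, ∀ y ∈ Set.Icc (0 : (Σ a : V, Fin (n a)) → ℝ) 1, x ≤ y → y ∈ D) →
      ∀ s t : ℝ, 0 < s → s ≤ t → t ≤ 1 → 0 < μ {ω | P ω i ≤ s} →
        (μ[|{ω | P ω i ≤ s}]) {ω | P ω ∈ D} ≤ (μ[|{ω | P ω i ≤ t}]) {ω | P ω ∈ D})
    (α : ℝ) (hα : α ∈ Set.Ioo (0 : ℝ) 1) (c : ℕ) :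
    ∫ ω, (((quteRej G n c α (P ω) ∩ H0).card : ℝ) /
        (max ((quteRej G n c α (P ω)).card) 1 : ℕ)) ∂μ
      ≤ α * H0.card / Fintype.card (Σ a : V, Fin (n a)) :=
  qute_multi_step_fdr_control_prds_general G n μ P hPmeas H0 hnull hPRDS α hα c
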